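/- arXiv:1010.1967 — 2 statements merged into one kernel-verified Lean document; each statement's English description precedes it below -/
import Mathlib

section
/- Let P be a palindromic polynomial over ℂ (P̃ = P) of degree 2n with nonzero constant coefficient, with coefficients a_0,…,a_{2n} (so a_i = a_{2n−i}). Then for every z ∈ ℂ with z ≠ 0, writing w = (z + 1/z)/2, one has P(z)/(2zⁿ) = a_n/2 + Σ_{k=1}^{n} a_{n+k} · T_k(w), where T_k is the k-th Chebyshev polynomial of the first kind. (This is the paper's Proposition 2.9 with the k = 0 term correctly halved.) -/
/-!
Palindromy pairs the coefficients as `a_{n-k} = a_{n+k}`, so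
`P(z) = zⁿ (a_n + Σ_{k=1}^n a_{n+k} (z^k + z^{-k}))`, and with `w = (z + z⁻¹)/2` one has
`T_k(w) = (z^k + z^{-k})/2` (the Dickson-polynomial form of `T_k`).
-/

open Polynomial Finset

theorem Finset.sum_range_two_mul_add_one_eq_add_sum_Icc {M : Type*} [AddCommMonoid M]
    (f : ℕ → M) (n : ℕ) :
    ∑ i ∈ range (2 * n + 1), f i = f n + ∑ k ∈ Icc 1 n, (f (n + k) + f (n - k)) := by
  rw [show 2 * n + 1 = n + (n + 1) by ring, sum_range_add, sum_range_succ', ← sum_range_reflect,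
    ← Ico_add_one_right_eq_Icc, sum_Ico_eq_sum_range, Nat.add_sub_cancel, sum_add_distrib]
  simp only [add_zero, add_comm 1, Nat.sub_sub]
  abel

namespace Polynomial

theorem Chebyshev.T_eval_half_add {R : Type*} [CommRing R] [Invertible (2 : R)]
    (x y : R) (h : x * y = 1) (n : ℕ) :
    (T R n).eval (⅟2 * (x + y)) = ⅟2 * (x ^ n + y ^ n) := by
  rw [chebyshev_T_eq_dickson_one_one]
  simp [eval_comp, dickson_one_one_eval_add_inv x y h]

variable {R : Type*}

theorem coeff_eq_coeff_natDegree_sub_of_reverse_eq [Semiring R] {p : R[X]} (hp : p.reverse = p)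
    {i : ℕ} (hi : i ≤ p.natDegree) : p.coeff i = p.coeff (p.natDegree - i) := by
  conv_lhs => rw [← hp]
  rw [coeff_reverse, revAt_le hi]

theorem eval_eq_of_reverse_eq [CommSemiring R] {p : R[X]} {n : ℕ} (hp : p.reverse = p)
    (hdeg : p.natDegree = 2 * n) (x : R) :
    p.eval x =
      p.coeff n * x ^ n + ∑ k ∈ Icc 1 n, p.coeff (n + k) * (x ^ (n + k) + x ^ (n - k)) := by
  rw [eval_eq_sum_range, hdeg, sum_range_two_mul_add_one_eq_add_sum_Icc]
  refine congrArg _ (sum_congr rfl fun k hk => ?_)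
  have hk : k ≤ n := (mem_Icc.mp hk).2
  rw [coeff_eq_coeff_natDegree_sub_of_reverse_eq hp (i := n - k) (by omega), hdeg,
    show 2 * n - (n - k) = n + k by omega, mul_add]

end Polynomial

theorem palindromic_chebyshev_expansion_general (n : ℕ) (P : Polynomial ℂ)
    (hdeg : P.natDegree = 2 * n)
    (hpal : P.reverse = P)
    (z : ℂ) (hz : z ≠ 0) :
    P.eval z / (2 * z ^ n) =
      P.coeff n / 2 +
        ∑ k ∈ Finset.Icc 1 n,
          P.coeff (n + k) *
            (Polynomial.Chebyshev.T ℂ k).eval ((z + 1 / z) / 2) := by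
  have hT (k : ℕ) : (Chebyshev.T ℂ k).eval ((z + 1 / z) / 2) = (z ^ k + z⁻¹ ^ k) / 2 := by
    simpa [div_eq_mul_inv, mul_comm] using
      Chebyshev.T_eval_half_add z z⁻¹ (mul_inv_cancel₀ hz) k
  rw [eval_eq_of_reverse_eq hpal hdeg, add_div, sum_div]
  congr 1
  · field_simp
  refine sum_congr rfl fun k hk => ?_
  rw [hT, pow_add, pow_sub₀ z hz (mem_Icc.mp hk).2, inv_pow]
  field_simp

theorem palindromic_chebyshev_expansion (n : ℕ) (P : Polynomial ℂ)
    (hP0 : P.coeff 0 ≠ 0) (hdeg : P.natDegree = 2 * n)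
    (hpal : P.reverse = P)
    (z : ℂ) (hz : z ≠ 0) :
    P.eval z / (2 * z ^ n) =
      P.coeff n / 2 +
        ∑ k ∈ Finset.Icc 1 n,
          P.coeff (n + k) *
            (Polynomial.Chebyshev.T ℂ k).eval ((z + 1 / z) / 2) :=
  palindromic_chebyshev_expansion_general n P hdeg hpal z hz
end

section
/- Let n be a natural number not divisible by 10. Then 11 divides the pasting of n with its base-10 reversal ñ, namely 11 ∣ 10^{C(n)}·n + ñ, where C(n) = (Nat.digits 10 n).length is the number of digits of n and ñ = Nat.ofDigits 10 ((Nat.digits 10 n).reverse). -/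
/-!
Modulo `b + 1` the base is `-1`, so `n` is congruent to the alternating sum of its base-`b`
digits. Reversing a list of `L` digits multiplies that alternating sum by `(-1) ^ (L + 1)`,
while `b ^ L ≡ (-1) ^ L`; hence the two summands of `b ^ L * n + ñ` cancel modulo `b + 1`.
-/

namespace Nat

variable {R : Type*}

theorem ofDigits_append' [Semiring R] (b : R) (l₁ l₂ : List ℕ) :
    ofDigits b (l₁ ++ l₂) = ofDigits b l₁ + b ^ l₁.length * ofDigits b l₂ := by
  induction l₁ with
  | nil => simp [ofDigits]
  | cons d l ih =>
    simp only [List.cons_append, ofDigits, ih, List.length_cons]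
    rw [_root_.pow_succ', mul_add, mul_assoc, add_assoc]

theorem ofDigits_neg_one_reverse [CommRing R] (l : List ℕ) :
    ofDigits (-1 : R) l.reverse = (-1) ^ (l.length + 1) * ofDigits (-1) l := by
  induction l with
  | nil => simp [ofDigits]
  | cons d l ih =>
    simp only [List.reverse_cons, ofDigits_append', ih, List.length_reverse, ofDigits,
      List.length_cons]
    ring

theorem succ_dvd_pow_length_digits_mul_add_ofDigits_reverse (b n : ℕ) :
    b + 1 ∣ b ^ (digits b n).length * n + ofDigits b (digits b n).reverse := by
  rw [← ZMod.natCast_eq_zero_iff]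
  have hb : (b : ZMod (b + 1)) = -1 := by
    rw [eq_neg_iff_add_eq_zero, ← Nat.cast_succ, ZMod.natCast_self]
  have hn : (n : ZMod (b + 1)) = ofDigits (-1) (digits b n) := by
    rw [← hb, ← coe_ofDigits, ofDigits_digits]
  push_cast
  rw [hb, ofDigits_neg_one_reverse, hn]
  ring

end Nat

theorem eleven_dvd_paste_reverse_general (n : ℕ) :
    11 ∣ 10 ^ (Nat.digits 10 n).length * n +
      Nat.ofDigits 10 ((Nat.digits 10 n).reverse) :=
  Nat.succ_dvd_pow_length_digits_mul_add_ofDigits_reverse 10 n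

theorem eleven_dvd_paste_reverse (n : ℕ) (h : ¬ (10 ∣ n)) :
    11 ∣ 10 ^ (Nat.digits 10 n).length * n +
      Nat.ofDigits 10 ((Nat.digits 10 n).reverse) :=
  eleven_dvd_paste_reverse_general n
end
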